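/- Let G(t), t ∈ ℝ, be a continuous flow on a compact connected metric space X that is chain recurrent (for all x ∈ X, ε > 0, T > 0 there exist k ≥ 1, times t₁,…,t_k ≥ T, and points x₀ = x, x₁, …, x_k = x with d(G(t_{i+1}) x_i, x_{i+1}) < ε for 0 ≤ i < k). If M₁, …, M_k is a Morse decomposition of X (mutually disjoint compact invariant sets such that every orbit outside their union has α-limit in some M_i and ω-limit in some M_j with i < j), then X = M₁ ∪ … ∪ M_k; consequently, since X is connected and the M_j are disjoint compact sets, k = 1 and X = M₁. -/

import Mathlib

/-!
Suppose some point lies outside all Morse sets, and among the Morse sets containing the ω-limit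
of such a point choose a maximal one, `A = M top`. If orbits starting arbitrarily close to `A`
left its `θ`-neighbourhood, a limit of their first exit points would be a point outside all Morse
sets whose whole backward orbit stays `θ`-close to `A`; its α-limit set would then lie in `A` and
its ω-limit set in a strictly higher Morse set, contradicting maximality. So `A` is stable, and by
compactness it uniformly attracts a closed neighbourhood `U`, mapping it after a fixed time deep
inside itself. An `ε`-chain from a point `x₀ ∉ U` whose orbit is attracted to `A` can then never
leave `U`, so it never returns to `x₀`, contradicting chain recurrence. Hence the Morse sets cover
`X`, and a connected space is not a disjoint union of two nonempty closed sets.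
-/

open Filter Function Metric Set Topology

theorem exists_hitting_time {f : ℝ → ℝ} (hf : Continuous f) {θ t₁ : ℝ} (h₀ : f 0 < θ)
    (ht₁ : 0 ≤ t₁) (h₁ : θ ≤ f t₁) : ∃ τ, 0 ≤ τ ∧ θ ≤ f τ ∧ ∀ t ∈ Icc 0 τ, f t ≤ θ := by
  set S := {t | 0 ≤ t ∧ θ ≤ f t}
  have hbdd : BddBelow S := ⟨0, fun t ht => ht.1⟩
  obtain ⟨hτ, hθτ⟩ : sInf S ∈ S :=
    (isClosed_Ici.inter (isClosed_le continuous_const hf)).csInf_mem ⟨t₁, ht₁, h₁⟩ hbdd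
  refine ⟨sInf S, hτ, hθτ, ?_⟩
  have hbefore : Ico 0 (sInf S) ⊆ {t | f t ≤ θ} := fun t ht =>
    not_lt.mp fun h => (csInf_le hbdd ⟨ht.1, h.le⟩).not_gt ht.2
  have hτ₀ : (0 : ℝ) ≠ sInf S := by
    rintro h
    rw [← h] at hθτ
    linarith
  rw [← closure_Ico hτ₀]
  exact closure_minimal hbefore (isClosed_le hf continuous_const)

namespace Flow

variable {X : Type*} [MetricSpace X] (ϕ : Flow ℝ X)

def seqAlphaLimit (x : X) : Set X :=
  {y | ∃ ts : ℕ → ℝ, Tendsto ts atTop atBot ∧ Tendsto (fun n => ϕ (ts n) x) atTop (𝓝 y)}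

def seqOmegaLimit (x : X) : Set X :=
  {y | ∃ ts : ℕ → ℝ, Tendsto ts atTop atTop ∧ Tendsto (fun n => ϕ (ts n) x) atTop (𝓝 y)}

def IsChainRecurrent : Prop :=
  ∀ (x : X) (ε T : ℝ), 0 < ε → 0 < T →
    ∃ (m : ℕ) (xs : ℕ → X) (ts : ℕ → ℝ), 1 ≤ m ∧ xs 0 = x ∧ xs m = x ∧
      ∀ i < m, T ≤ ts (i + 1) ∧ dist (ϕ (ts (i + 1)) (xs i)) (xs (i + 1)) < ε

structure IsMorseDecomposition {ι : Type*} [Preorder ι] (M : ι → Set X) : Prop where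
  nonempty : ∀ i, (M i).Nonempty
  isCompact : ∀ i, IsCompact (M i)
  pairwise_disjoint : Pairwise (Disjoint on M)
  isInvariant : ∀ i, IsInvariant ϕ (M i)
  exists_lt : ∀ x ∉ ⋃ i, M i,
    ∃ i j, i < j ∧ ϕ.seqAlphaLimit x ⊆ M i ∧ ϕ.seqOmegaLimit x ⊆ M j

variable {ϕ}

theorem seqAlphaLimit_subset_of_eventually_mem {x : X} {C : Set X} (hC : IsClosed C)
    (h : ∀ᶠ t in atBot, ϕ t x ∈ C) : ϕ.seqAlphaLimit x ⊆ C :=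
  fun _ ⟨_, hts, hy⟩ => hC.mem_of_tendsto hy (hts.eventually h)

theorem seqOmegaLimit_subset_of_eventually_mem {x : X} {C : Set X} (hC : IsClosed C)
    (h : ∀ᶠ t in atTop, ϕ t x ∈ C) : ϕ.seqOmegaLimit x ⊆ C :=
  fun _ ⟨_, hts, hy⟩ => hC.mem_of_tendsto hy (hts.eventually h)

theorem tendsto_atTop_of_le_infDist {A : Set X} (hA : IsForwardInvariant ϕ A) {y : ℕ → X}
    {z : X} (hz : z ∈ A) (hyz : Tendsto y atTop (𝓝 z)) {τ : ℕ → ℝ} (hτ : ∀ n, 0 ≤ τ n)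
    {θ : ℝ} (hθ : 0 < θ) (hexit : ∀ n, θ ≤ infDist (ϕ (τ n) (y n)) A) :
    Tendsto τ atTop atTop := by
  refine tendsto_atTop.2 fun T => ?_
  by_contra hT
  obtain ⟨ψ, hψ, hψT⟩ := extraction_of_frequently_atTop
    ((not_eventually.mp hT).mono fun n h => (not_le.mp h).le)
  obtain ⟨t₀, ht₀, χ, hχ, hτt₀⟩ :=
    isCompact_Icc.tendsto_subseq (fun n => ⟨hτ (ψ n), hψT n⟩ : ∀ n, τ (ψ n) ∈ Icc 0 T)
  have hlim : Tendsto (fun n => ϕ (τ (ψ (χ n))) (y (ψ (χ n)))) atTop (𝓝 (ϕ t₀ z)) :=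
    (ϕ.cont'.tendsto (t₀, z)).comp (hτt₀.prodMk_nhds (hyz.comp (hψ.comp hχ).tendsto_atTop))
  have := ge_of_tendsto ((continuous_infDist_pt A).tendsto _ |>.comp hlim)
    (Eventually.of_forall fun n => hexit _)
  rw [infDist_zero_of_mem (hA ht₀.1 hz)] at this
  linarith

theorem eventually_forall_mem_of_isCompact {K W V : Set X} (hK : IsCompact K) (hW : IsOpen W)
    (hWV : ∀ y ∈ W, ∀ t ≥ 0, ϕ t y ∈ V) (hKW : ∀ v ∈ K, ∃ t, ϕ t v ∈ W) :
    ∀ᶠ t in atTop, ∀ v ∈ K, ϕ t v ∈ V := by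
  have hlocal : ∀ v ∈ K, ∀ᶠ p in atTop ×ˢ 𝓝 v, ϕ p.1 p.2 ∈ V := by
    intro v hv
    obtain ⟨tv, htv⟩ := hKW v hv
    have hnhd : {u | ϕ tv u ∈ W} ∈ 𝓝 v :=
      (hW.preimage (ϕ.continuous_toFun tv)).mem_nhds htv
    filter_upwards [prod_mem_prod (Ici_mem_atTop tv) hnhd] with ⟨t, u⟩ ⟨ht, hu⟩
    simpa only [← ϕ.map_add, sub_add_cancel] using hWV _ hu (t - tv) (sub_nonneg.2 ht)
  exact (Eventually.curry (hK.mem_prod_nhdsSet_of_forall hlocal)).mono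
    fun _ h => h.self_of_nhdsSet

theorem IsChainRecurrent.mem_of_eventually_mem (hrec : ϕ.IsChainRecurrent) {U V : Set X}
    {ε : ℝ} (hε : 0 < ε) (hVU : thickening ε V ⊆ U) (hUV : ∀ᶠ t in atTop, ∀ v ∈ U, ϕ t v ∈ V)
    {x : X} (hx : ∀ᶠ t in atTop, ϕ t x ∈ V) : x ∈ U := by
  obtain ⟨T, hT⟩ := eventually_atTop.1 (hUV.and hx)
  obtain ⟨m, xs, ts, hm, hx₀, hxm, hstep⟩ := hrec x ε (max T 1) hε (by positivity)
  have hnext : ∀ i < m, (i = 0 ∨ xs i ∈ U) → xs (i + 1) ∈ U := by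
    intro i hi hxi
    obtain ⟨hTi, hdist⟩ := hstep i hi
    obtain ⟨hUV', hx'⟩ := hT _ (le_of_max_le_left hTi)
    have hV : ϕ (ts (i + 1)) (xs i) ∈ V := by
      rcases hxi with rfl | hxi
      · rwa [hx₀]
      · exact hUV' _ hxi
    exact hVU (mem_thickening_iff.2 ⟨_, hV, by rwa [dist_comm]⟩)
  have hchain : ∀ i, 1 ≤ i → i ≤ m → xs i ∈ U := by
    refine Nat.le_induction (fun h1 => hnext 0 h1 (.inl rfl)) fun i hi ih hle => ?_
    exact hnext i hle (.inr (ih (by omega)))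
  simpa [hxm] using hchain m hm le_rfl

section CompactSpace

variable [CompactSpace X]

theorem seqAlphaLimit_nonempty (x : X) : (ϕ.seqAlphaLimit x).Nonempty := by
  obtain ⟨y, -, φ, hφ, hy⟩ :=
    isCompact_univ.tendsto_subseq (x := fun n : ℕ => ϕ (-n) x) fun _ => mem_univ _
  exact ⟨y, fun n => -(φ n : ℝ),
    tendsto_neg_atTop_atBot.comp (tendsto_natCast_atTop_atTop.comp hφ.tendsto_atTop), hy⟩

theorem eventually_mem_of_seqOmegaLimit_subset {x : X} {U : Set X} (hU : IsOpen U)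
    (h : ϕ.seqOmegaLimit x ⊆ U) : ∀ᶠ t in atTop, ϕ t x ∈ U := by
  by_contra hfreq
  obtain ⟨ts, hts, hout⟩ := exists_seq_forall_of_frequently (not_eventually.mp hfreq)
  obtain ⟨y, -, φ, hφ, hy⟩ :=
    isCompact_univ.tendsto_subseq (x := fun n => ϕ (ts n) x) fun _ => mem_univ _
  exact hU.isClosed_compl.mem_of_tendsto hy (Eventually.of_forall fun n => hout (φ n))
    (h ⟨ts ∘ φ, hts.comp hφ.tendsto_atTop, hy⟩)

theorem eventually_infDist_lt_of_seqOmegaLimit_subset {x : X} {A : Set X}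
    (h : ϕ.seqOmegaLimit x ⊆ A) {c : ℝ} (hc : 0 < c) : ∀ᶠ t in atTop, infDist (ϕ t x) A < c :=
  eventually_mem_of_seqOmegaLimit_subset (isOpen_lt (continuous_infDist_pt A) continuous_const)
    fun y hy => by simpa [infDist_zero_of_mem (h hy)] using hc

theorem exists_forall_infDist_lt_of_escape {A : Set X} (hA : IsClosed A) (hA₀ : A.Nonempty)
    (hinv : IsForwardInvariant ϕ A) {θ : ℝ} (hθ : 0 < θ)
    (hesc : ∀ w, θ ≤ infDist w A → ∃ t ≤ 0, θ < infDist (ϕ t w) A) :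
    ∃ ρ, 0 < ρ ∧ ρ < θ ∧ ∀ y, infDist y A ≤ ρ → ∀ t ≥ 0, infDist (ϕ t y) A < θ := by
  by_contra! hcon
  have hexit : ∀ n : ℕ, ∃ y τ, infDist y A ≤ θ / (n + 2) ∧ 0 ≤ τ ∧
      θ ≤ infDist (ϕ τ y) A ∧ ∀ t ∈ Icc 0 τ, infDist (ϕ t y) A ≤ θ := by
    intro n
    have hρθ : θ / (n + 2) < θ := div_lt_self hθ (by linarith [n.cast_nonneg (α := ℝ)])
    obtain ⟨y, hy, t₁, ht₁, h₁⟩ := hcon (θ / (n + 2)) (by positivity) hρθ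
    have h₀ : infDist (ϕ 0 y) A < θ := by rw [ϕ.map_zero_apply]; exact hy.trans_lt hρθ
    obtain ⟨τ, hτ, hθτ, hle⟩ := exists_hitting_time
      ((continuous_infDist_pt A).comp (ϕ.continuous continuous_id continuous_const)) h₀ ht₁ h₁
    exact ⟨y, τ, hy, hτ, hθτ, hle⟩
  choose y τ hy hτ hθτ hle using hexit
  obtain ⟨z, -, φ, hφ, hyz⟩ := isCompact_univ.tendsto_subseq (x := y) fun _ => mem_univ _
  have hz : z ∈ A := by
    have hρ : Tendsto (fun n : ℕ => θ / (n + 2)) atTop (𝓝 0) :=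
      tendsto_const_nhds.div_atTop (tendsto_atTop_add_const_right _ 2 tendsto_natCast_atTop_atTop)
    have hdist : Tendsto (fun n => infDist (y (φ n)) A) atTop (𝓝 0) :=
      squeeze_zero (fun _ => infDist_nonneg) (fun n => hy (φ n)) (hρ.comp hφ.tendsto_atTop)
    exact (hA.mem_iff_infDist_zero hA₀).2
      (tendsto_nhds_unique ((continuous_infDist_pt A).tendsto z |>.comp hyz) hdist)
  have hτ_top := tendsto_atTop_of_le_infDist hinv hz hyz (fun n => hτ _) hθ (fun n => hθτ _)
  obtain ⟨w, -, χ, hχ, hw⟩ := isCompact_univ.tendsto_subseq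
    (x := fun n => ϕ (τ (φ n)) (y (φ n))) fun _ => mem_univ _
  obtain ⟨t, ht, hθt⟩ := hesc w (ge_of_tendsto ((continuous_infDist_pt A).tendsto _ |>.comp hw)
    (Eventually.of_forall fun n => hθτ _))
  have hback : Tendsto (fun n => ϕ (t + τ (φ (χ n))) (y (φ (χ n)))) atTop (𝓝 (ϕ t w)) := by
    simpa only [comp_def, ϕ.map_add] using ((ϕ.continuous_toFun t).tendsto w).comp hw
  refine hθt.not_ge (le_of_tendsto ((continuous_infDist_pt A).tendsto _ |>.comp hback) ?_)
  filter_upwards [(hτ_top.comp hχ.tendsto_atTop).eventually_ge_atTop (-t)]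
    with n (hn : -t ≤ τ (φ (χ n)))
  exact hle _ _ ⟨by linarith, by linarith⟩

end CompactSpace

namespace IsMorseDecomposition

variable {ι : Type*} [Preorder ι] {M : ι → Set X} (hM : ϕ.IsMorseDecomposition M)
include hM

theorem seqOmegaLimit_subset_iUnion (x : X) : ϕ.seqOmegaLimit x ⊆ ⋃ i, M i := by
  by_cases hx : x ∈ ⋃ i, M i
  · obtain ⟨i, hi⟩ := mem_iUnion.1 hx
    refine (seqOmegaLimit_subset_of_eventually_mem (hM.isCompact i).isClosed ?_).trans
      (subset_iUnion M i)
    exact Eventually.of_forall fun t => hM.isInvariant i t hi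
  · obtain ⟨i, j, -, -, hω⟩ := hM.exists_lt x hx
    exact hω.trans (subset_iUnion M j)

theorem exists_pos_mem_of_infDist_lt [Finite ι] (j : ι) :
    ∃ δ > 0, ∀ x ∈ ⋃ i, M i, infDist x (M j) < δ → x ∈ M j := by
  have hopen : IsOpen (⋃ i ∈ {i | i ≠ j}, M i)ᶜ :=
    ((toFinite _).isClosed_biUnion fun i _ => (hM.isCompact i).isClosed).isOpen_compl
  have hsub : M j ⊆ (⋃ i ∈ {i | i ≠ j}, M i)ᶜ := fun x hx hmem => by
    obtain ⟨i, hi, hxi⟩ := mem_iUnion₂.1 hmem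
    exact disjoint_left.1 (hM.pairwise_disjoint hi) hxi hx
  obtain ⟨δ, hδ, hthick⟩ := (hM.isCompact j).exists_thickening_subset_open hopen hsub
  refine ⟨δ, hδ, fun x hx hxδ => ?_⟩
  obtain ⟨i, hi⟩ := mem_iUnion.1 hx
  by_contra hxj
  have hij : i ≠ j := fun h => hxj (h ▸ hi)
  exact hthick ((mem_thickening_iff_infDist_lt (hM.nonempty j)).2 hxδ) (mem_biUnion hij hi)

theorem exists_nonpos_lt_infDist [CompactSpace X] {top : ι}
    (htop : ∀ x ∉ ⋃ i, M i, ∀ j, ϕ.seqOmegaLimit x ⊆ M j → ¬ top < j) {δ : ℝ}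
    (hδ : ∀ x ∈ ⋃ i, M i, infDist x (M top) < δ → x ∈ M top) {θ : ℝ} (hθ : 0 < θ)
    (hθδ : θ < δ) {w : X} (hw : θ ≤ infDist w (M top)) :
    ∃ t ≤ 0, θ < infDist (ϕ t w) (M top) := by
  by_contra! hback
  have hwM : w ∉ ⋃ i, M i := fun hwM => by
    have hw_near : infDist w (M top) < δ := by
      simpa only [ϕ.map_zero_apply] using (hback 0 le_rfl).trans_lt hθδ
    rw [infDist_zero_of_mem (hδ w hwM hw_near)] at hw
    linarith
  obtain ⟨i, j, hij, hα, hω⟩ := hM.exists_lt w hwM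
  obtain ⟨a, ha⟩ := ϕ.seqAlphaLimit_nonempty w
  have ha_near : infDist a (M top) ≤ θ :=
    seqAlphaLimit_subset_of_eventually_mem (isClosed_le (continuous_infDist_pt _) continuous_const)
      ((eventually_le_atBot 0).mono hback) ha
  have ha_top : a ∈ M top := hδ a (mem_iUnion_of_mem i (hα ha)) (ha_near.trans_lt hθδ)
  obtain rfl : i = top := by
    by_contra h
    exact disjoint_left.1 (hM.pairwise_disjoint h) (hα ha) ha_top
  exact htop w hwM j hω hij

theorem exists_attracting_nbhd [CompactSpace X] [Finite ι] {top : ι}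
    (htop : ∀ x ∉ ⋃ i, M i, ∀ j, ϕ.seqOmegaLimit x ⊆ M j → ¬ top < j) {c : ℝ} (hc : 0 < c) :
    ∃ r, 0 < r ∧ r < c ∧ ∀ᶠ t in atTop,
      ∀ v ∈ {v | infDist v (M top) ≤ r}, ϕ t v ∈ {y | infDist y (M top) < r / 2} := by
  set A := M top
  obtain ⟨δ, hδ, hgap⟩ := hM.exists_pos_mem_of_infDist_lt top
  have hstab (θ : ℝ) (hθ : 0 < θ) (hθδ : θ < δ) :
      ∃ ρ, 0 < ρ ∧ ρ < θ ∧ ∀ y, infDist y A ≤ ρ → ∀ t ≥ 0, infDist (ϕ t y) A < θ :=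
    exists_forall_infDist_lt_of_escape (hM.isCompact top).isClosed (hM.nonempty top)
      (hM.isInvariant top).isForwardInvariant hθ fun _ hw =>
        hM.exists_nonpos_lt_infDist htop hgap hθ hθδ hw
  obtain ⟨η, hη, hηmin⟩ := exists_between (lt_min hδ hc)
  obtain ⟨hηδ, hηc⟩ := lt_min_iff.1 hηmin
  obtain ⟨r, hr, hrη, hr_stab⟩ := hstab η hη hηδ
  obtain ⟨ρ, hρ, -, hρ_stab⟩ := hstab (r / 2) (half_pos hr) (by linarith)
  have hbasin (v : X) (hv : infDist v A ≤ r) : ϕ.seqOmegaLimit v ⊆ A := fun y hy =>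
    hgap y (hM.seqOmegaLimit_subset_iUnion v hy) <| lt_of_le_of_lt
      (seqOmegaLimit_subset_of_eventually_mem (isClosed_le (continuous_infDist_pt A)
        continuous_const) ((eventually_ge_atTop 0).mono fun t ht => (hr_stab v hv t ht).le) hy)
      hηδ
  refine ⟨r, hr, by linarith, eventually_forall_mem_of_isCompact
    (isClosed_le (continuous_infDist_pt A) continuous_const).isCompact
    (isOpen_lt (continuous_infDist_pt A) continuous_const)
    (fun y hy t ht => hρ_stab y (le_of_lt hy) t ht)
    fun v hv => (eventually_infDist_lt_of_seqOmegaLimit_subset (hbasin v hv) hρ).exists⟩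

theorem iUnion_eq_univ [CompactSpace X] [Finite ι] (hrec : ϕ.IsChainRecurrent) :
    ⋃ i, M i = univ := by
  by_contra hU
  obtain ⟨x, hx⟩ := (ne_univ_iff_exists_notMem _).1 hU
  obtain ⟨-, j, -, -, hω⟩ := hM.exists_lt x hx
  obtain ⟨top, ⟨x₀, hx₀, hx₀ω⟩, hmax⟩ :=
    (toFinite {j | ∃ x ∉ ⋃ i, M i, ϕ.seqOmegaLimit x ⊆ M j}).exists_maximal ⟨j, x, hx, hω⟩
  set A := M top
  have hx₀A : 0 < infDist x₀ A := ((hM.isCompact top).isClosed.notMem_iff_infDist_pos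
    (hM.nonempty top)).1 fun h => hx₀ (mem_iUnion_of_mem top h)
  obtain ⟨r, hr, hrx₀, hattract⟩ := hM.exists_attracting_nbhd
    (fun x hx j hj hlt => hlt.not_ge (hmax ⟨x, hx, hj⟩ hlt.le)) hx₀A
  have htrap : thickening (r / 2) {y | infDist y A < r / 2} ⊆ {v | infDist v A ≤ r} := by
    intro y hy
    obtain ⟨z, hz : infDist z A < r / 2, hyz⟩ := mem_thickening_iff.1 hy
    show infDist y A ≤ r
    linarith [infDist_le_infDist_add_dist (x := y) (y := z) (s := A)]
  have hx₀r : infDist x₀ A ≤ r := hrec.mem_of_eventually_mem (half_pos hr) htrap hattract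
    (eventually_infDist_lt_of_seqOmegaLimit_subset hx₀ω (half_pos hr))
  linarith

end IsMorseDecomposition

end Flow

theorem stmt_19_general {X : Type*} [MetricSpace X] [CompactSpace X] [ConnectedSpace X]
    (G : ℝ → X → X)
    (hcont : Continuous fun p : ℝ × X => G p.1 p.2)
    (hid : ∀ x, G 0 x = x)
    (hgroup : ∀ s t x, G (s + t) x = G s (G t x))
    (hchain : ∀ (x : X) (ε T : ℝ), 0 < ε → 0 < T →
      ∃ (m : ℕ) (xs : ℕ → X) (ts : ℕ → ℝ), 1 ≤ m ∧ xs 0 = x ∧ xs m = x ∧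
        ∀ i < m, T ≤ ts (i + 1) ∧ dist (G (ts (i + 1)) (xs i)) (xs (i + 1)) < ε)
    (k : ℕ) (M : Fin k → Set X)
    (hne : ∀ j, (M j).Nonempty)
    (hcomp : ∀ j, IsCompact (M j))
    (hdisj : ∀ i j, i ≠ j → Disjoint (M i) (M j))
    (hinv : ∀ j, ∀ x ∈ M j, ∀ t, G t x ∈ M j)
    (hconn : ∀ x, x ∉ ⋃ j, M j →
      ∃ i j : Fin k, i < j ∧
        {y : X | ∃ ts : ℕ → ℝ, Filter.Tendsto ts Filter.atTop Filter.atBot ∧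
          Filter.Tendsto (fun n => G (ts n) x) Filter.atTop (nhds y)} ⊆ M i ∧
        {y : X | ∃ ts : ℕ → ℝ, Filter.Tendsto ts Filter.atTop Filter.atTop ∧
          Filter.Tendsto (fun n => G (ts n) x) Filter.atTop (nhds y)} ⊆ M j) :
    (⋃ j, M j) = Set.univ ∧ k = 1 := by
  let ϕ : Flow ℝ X := ⟨G, hcont, hgroup, hid⟩
  have hM : ϕ.IsMorseDecomposition M := ⟨hne, hcomp, hdisj, fun j t x hx => hinv j x hx t, hconn⟩
  have hU : ⋃ j, M j = univ := hM.iUnion_eq_univ hchain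
  have : Subsingleton (Fin k) := subsingleton_of_disjoint_isClosed_iUnion_eq_univ hne hdisj
    (fun j => (hcomp j).isClosed) hU
  obtain ⟨j, -⟩ := mem_iUnion.1 (hU ▸ mem_univ (Classical.arbitrary X))
  exact ⟨hU, le_antisymm (Fin.subsingleton_iff_le_one.1 this) j.pos⟩

/-- A chain recurrent continuous flow on a compact connected metric space admitting a
Morse decomposition `M₁, …, M_k` (mutually disjoint nonempty compact invariant sets
such that every orbit outside their union connects some `M_i` to some `M_j` with
`i < j`) satisfies `X = ⋃ M_j`, and hence `k = 1`. -/
theorem stmt_19 {X : Type*} [MetricSpace X] [CompactSpace X] [ConnectedSpace X]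
    (G : ℝ → X → X)
    (hcont : Continuous fun p : ℝ × X => G p.1 p.2)
    (hid : ∀ x, G 0 x = x)
    (hgroup : ∀ s t x, G (s + t) x = G s (G t x))
    (hchain : ∀ (x : X) (ε T : ℝ), 0 < ε → 0 < T →
      ∃ (m : ℕ) (xs : ℕ → X) (ts : ℕ → ℝ), 1 ≤ m ∧ xs 0 = x ∧ xs m = x ∧
        ∀ i < m, T ≤ ts (i + 1) ∧ dist (G (ts (i + 1)) (xs i)) (xs (i + 1)) < ε)
    (k : ℕ) (hk : 0 < k) (M : Fin k → Set X)
    (hne : ∀ j, (M j).Nonempty)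
    (hcomp : ∀ j, IsCompact (M j))
    (hdisj : ∀ i j, i ≠ j → Disjoint (M i) (M j))
    (hinv : ∀ j, ∀ x ∈ M j, ∀ t, G t x ∈ M j)
    (hconn : ∀ x, x ∉ ⋃ j, M j →
      ∃ i j : Fin k, i < j ∧
        {y : X | ∃ ts : ℕ → ℝ, Filter.Tendsto ts Filter.atTop Filter.atBot ∧
          Filter.Tendsto (fun n => G (ts n) x) Filter.atTop (nhds y)} ⊆ M i ∧
        {y : X | ∃ ts : ℕ → ℝ, Filter.Tendsto ts Filter.atTop Filter.atTop ∧
          Filter.Tendsto (fun n => G (ts n) x) Filter.atTop (nhds y)} ⊆ M j) :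
    (⋃ j, M j) = Set.univ ∧ k = 1 :=
  stmt_19_general G hcont hid hgroup hchain k M hne hcomp hdisj hinv hconn
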